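/- arXiv:1712.06043 — 2 statements merged into one kernel-verified Lean document; each statement's English description precedes it below -/
import Mathlib

section
/- Let (A, S_A) and (B, S_B) be implicative algebras and let f : A → B be a function satisfying conditions (1) f(S_A) ⊆ S_B and (3) f(⨅ P) = ⨅ f(P) for every subset P ⊆ A. Then f satisfies condition (2) [there exists r ∈ S_B with r ≤ f(a → a′) → (f(a) → f(a′)) for all a, a′ ∈ A with a → a′ ∈ S_A] if and only if f satisfies condition (2′): there exists t ∈ S_B such that for all s ∈ S_A and all a ∈ A, (t ∘ f(s)) ∘ f(a) ≤ f(s ∘ a). -/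
/-!
Application is left adjoint to implication, `a ∘ b ≤ c ↔ a ≤ b → c`, because `b → -` preserves
infima. Curried twice it reads `(t ∘ x) ∘ y ≤ c ↔ t ≤ x → (y → c)`, so (2′) for `s`, `a` is
(2) for the pair `a`, `s ∘ a`, weakened along `s ≤ a → s ∘ a` (antitonicity of `→` in its first
argument, monotonicity of `f`); conversely (2) for `a → a'` is (2′) for `s = a → a'`, since
`(a → a') ∘ a ≤ a'`.
-/

/-- The application map associated to an implication on a complete lattice. -/
def appOf {A : Type*} [CompleteLattice A] (imp : A → A → A) (a b : A) : A :=
  sInf {c | a ≤ imp b c}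

section Adjunction

variable {α : Type*} [CompleteLattice α] {imp : α → α → α}

theorem appOf_le_of_le_imp {a b c : α} (h : a ≤ imp b c) : appOf imp a b ≤ c :=
  sInf_le h

variable (hinf : ∀ (a : α) (P : Set α), imp a (sInf P) = ⨅ b ∈ P, imp a b)
include hinf

theorem monotone_imp_of_map_sInf (a : α) : Monotone (imp a) :=
  OrderHomClass.mono (⟨imp a, fun P => by rw [hinf, sInf_image]⟩ : sInfHom α α)

theorem le_imp_appOf (a b : α) : a ≤ imp b (appOf imp a b) := by
  rw [appOf, hinf]
  exact le_iInf₂ fun _ hc => hc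

theorem appOf_le_iff {a b c : α} : appOf imp a b ≤ c ↔ a ≤ imp b c :=
  ⟨fun h => (le_imp_appOf hinf a b).trans (monotone_imp_of_map_sInf hinf b h),
    appOf_le_of_le_imp⟩

theorem appOf_appOf_le_iff {t x y c : α} :
    appOf imp (appOf imp t x) y ≤ c ↔ t ≤ imp x (imp y c) := by
  rw [appOf_le_iff hinf, appOf_le_iff hinf]

end Adjunction

theorem applicative_condition_iff_general {A B : Type*} [CompleteLattice A] [CompleteLattice B]
    (impA : A → A → A) (impB : B → B → B)
    (hinfA : ∀ (a : A) (P : Set A), impA a (sInf P) = ⨅ b ∈ P, impA a b)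
    (hmonoB : ∀ a a' b b' : B, a' ≤ a → b ≤ b' → impB a b ≤ impB a' b')
    (hinfB : ∀ (a : B) (P : Set B), impB a (sInf P) = ⨅ b ∈ P, impB a b)
    (SA : Set A) (SB : Set B)
    (SAup : ∀ a b : A, a ∈ SA → a ≤ b → b ∈ SA)
    (f : A → B)
    (h3 : ∀ P : Set A, f (sInf P) = sInf (f '' P)) :
    (∃ r ∈ SB, ∀ a a' : A, impA a a' ∈ SA → r ≤ impB (f (impA a a')) (impB (f a) (f a')))
      ↔ (∃ t ∈ SB, ∀ s ∈ SA, ∀ a : A,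
          appOf impB (appOf impB t (f s)) (f a) ≤ f (appOf impA s a)) := by
  have hf : Monotone f := OrderHomClass.mono (⟨f, h3⟩ : sInfHom A B)
  constructor
  · rintro ⟨r, hr, hr2⟩
    refine ⟨r, hr, fun s hs a => ?_⟩
    have hsa : s ≤ impA a (appOf impA s a) := le_imp_appOf hinfA s a
    rw [appOf_appOf_le_iff hinfB]
    exact (hr2 a _ (SAup s _ hs hsa)).trans (hmonoB _ _ _ _ (hf hsa) le_rfl)
  · rintro ⟨t, ht, ht2⟩
    refine ⟨t, ht, fun a a' haa' => ?_⟩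
    rw [← appOf_appOf_le_iff hinfB]
    exact (ht2 _ haa' a).trans (hf (appOf_le_of_le_imp le_rfl))

/-- For a function `f` between implicative algebras satisfying conditions (1) and (3)
of the definition of applicative morphism, condition (2) is equivalent to condition (2′):
there is `t ∈ S_B` with `(t ∘ f(s)) ∘ f(a) ≤ f(s ∘ a)` for all `s ∈ S_A` and `a ∈ A`. -/
theorem applicative_condition_iff {A B : Type*} [CompleteLattice A] [CompleteLattice B]
    (impA : A → A → A) (impB : B → B → B)
    (hmonoA : ∀ a a' b b' : A, a' ≤ a → b ≤ b' → impA a b ≤ impA a' b')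
    (hinfA : ∀ (a : A) (P : Set A), impA a (sInf P) = ⨅ b ∈ P, impA a b)
    (hmonoB : ∀ a a' b b' : B, a' ≤ a → b ≤ b' → impB a b ≤ impB a' b')
    (hinfB : ∀ (a : B) (P : Set B), impB a (sInf P) = ⨅ b ∈ P, impB a b)
    (SA : Set A) (SB : Set B)
    (SAup : ∀ a b : A, a ∈ SA → a ≤ b → b ∈ SA)
    (SAmp : ∀ a b : A, impA a b ∈ SA → a ∈ SA → b ∈ SA)
    (SAk : (⨅ (x : A) (y : A), impA x (impA y x)) ∈ SA)
    (SAs : (⨅ (x : A) (y : A) (z : A),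
        impA (impA x (impA y z)) (impA (impA x y) (impA x z))) ∈ SA)
    (SBup : ∀ a b : B, a ∈ SB → a ≤ b → b ∈ SB)
    (SBmp : ∀ a b : B, impB a b ∈ SB → a ∈ SB → b ∈ SB)
    (SBk : (⨅ (x : B) (y : B), impB x (impB y x)) ∈ SB)
    (SBs : (⨅ (x : B) (y : B) (z : B),
        impB (impB x (impB y z)) (impB (impB x y) (impB x z))) ∈ SB)
    (f : A → B)
    (h1 : ∀ a ∈ SA, f a ∈ SB)
    (h3 : ∀ P : Set A, f (sInf P) = sInf (f '' P)) :
    (∃ r ∈ SB, ∀ a a' : A, impA a a' ∈ SA → r ≤ impB (f (impA a a')) (impB (f a) (f a')))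
      ↔ (∃ t ∈ SB, ∀ s ∈ SA, ∀ a : A,
          appOf impB (appOf impB t (f s)) (f a) ≤ f (appOf impA s a)) :=
  applicative_condition_iff_general impA impB hinfA hmonoB hinfB SA SB SAup f h3
end

section
/- Let (A, ≤, →) be an implicative structure, ι an Alexandroff interior operator on A, and c_ι the associated closure operator defined by c_ι(a) = ⨅ {b ∈ A_ι : a ≤ b}. Let ∘ be the application map of → on A, and let ∘_ι be the application map of →_ι on A_ι, i.e. a ∘_ι b = ⨅ {d ∈ A_ι : a ≤ ι(b → d)} for a, b ∈ A_ι. Then for all a, b ∈ A_ι: a ∘_ι b = c_ι(a ∘ b). -/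
/-!
Since `→` preserves infima in its second argument, `a ∘ b` is the least `c` with `a ≤ b → c`,
and for an open `a` the inequality `a ≤ ι x` is equivalent to `a ≤ x`. Hence `a ∘_ι b` and
`c_ι(a ∘ b)` are infima of the same set of open elements `d`, namely those with `a ∘ b ≤ d`.
-/

/-- The set of fixed points (open elements) of an operator. -/
def fixedSet {A : Type*} (ι : A → A) : Set A := {x | ι x = x}

/-- The closure operator associated to an Alexandroff interior operator:
`c_ι(a) = ⨅ {b ∈ A_ι : a ≤ b}`. -/
def closureOf {A : Type*} [CompleteLattice A] (ι : A → A) (a : A) : A :=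
  sInf {b | b ∈ fixedSet ι ∧ a ≤ b}

/-- The application map of the modified implication `a →_ι b = ι(a → b)` on `A_ι`:
`a ∘_ι b = ⨅ {d ∈ A_ι : a ≤ ι(b → d)}`. -/
def appIota {A : Type*} [CompleteLattice A] (imp : A → A → A) (ι : A → A) (a b : A) : A :=
  sInf {d | d ∈ fixedSet ι ∧ a ≤ ι (imp b d)}

section Application

variable {A : Type*} [CompleteLattice A] {imp : A → A → A}

theorem le_imp_appOf_s17 (hinf : ∀ (a : A) (B : Set A), imp a (sInf B) = ⨅ b ∈ B, imp a b)
    (a b : A) : a ≤ imp b (appOf imp a b) := by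
  rw [appOf, hinf]
  exact le_iInf₂ fun _ hc => hc

theorem appOf_le_iff_s17 (hmono : ∀ b, Monotone (imp b))
    (hinf : ∀ (a : A) (B : Set A), imp a (sInf B) = ⨅ b ∈ B, imp a b) {a b c : A} :
    appOf imp a b ≤ c ↔ a ≤ imp b c :=
  ⟨fun h => (le_imp_appOf_s17 hinf a b).trans (hmono b h), fun h => sInf_le h⟩

end Application

theorem le_apply_iff_of_mem_fixedSet {A : Type*} [Preorder A] {ι : A → A}
    (hdefl : ∀ x, ι x ≤ x) (hmono : Monotone ι) {a x : A} (ha : a ∈ fixedSet ι) :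
    a ≤ ι x ↔ a ≤ x :=
  ⟨fun h => h.trans (hdefl x), fun h => ha ▸ hmono h⟩

theorem appIota_eq_closure_app_general {A : Type*} [CompleteLattice A]
    (imp : A → A → A)
    (hmono : ∀ a a' b b' : A, a' ≤ a → b ≤ b' → imp a b ≤ imp a' b')
    (hinf : ∀ (a : A) (B : Set A), imp a (sInf B) = ⨅ b ∈ B, imp a b)
    (ι : A → A)
    (hdefl : ∀ a, ι a ≤ a)
    (hmonoι : ∀ a b : A, a ≤ b → ι a ≤ ι b)
    (a b : A) (ha : a ∈ fixedSet ι) :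
    appIota imp ι a b = closureOf ι (appOf imp a b) := by
  have hmono_right : ∀ b, Monotone (imp b) := fun b _ _ h => hmono b b _ _ le_rfl h
  unfold appIota closureOf
  congr 1
  ext d
  simp only [Set.mem_ofPred_eq, le_apply_iff_of_mem_fixedSet hdefl hmonoι ha,
    appOf_le_iff_s17 hmono_right hinf]

/-- For open elements `a, b ∈ A_ι`, the application of the modified implicative
structure is the closure of the original application: `a ∘_ι b = c_ι(a ∘ b)`. -/
theorem appIota_eq_closure_app {A : Type*} [CompleteLattice A]
    (imp : A → A → A)
    (hmono : ∀ a a' b b' : A, a' ≤ a → b ≤ b' → imp a b ≤ imp a' b')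
    (hinf : ∀ (a : A) (B : Set A), imp a (sInf B) = ⨅ b ∈ B, imp a b)
    (ι : A → A)
    (hdefl : ∀ a, ι a ≤ a) (hidem : ∀ a, ι (ι a) = ι a)
    (hmonoι : ∀ a b : A, a ≤ b → ι a ≤ ι b)
    (halex : ∀ B : Set A, ι (sInf B) = ⨅ b ∈ B, ι b)
    (a b : A) (ha : a ∈ fixedSet ι) (hb : b ∈ fixedSet ι) :
    appIota imp ι a b = closureOf ι (appOf imp a b) :=
  appIota_eq_closure_app_general imp hmono hinf ι hdefl hmonoι a b ha
end
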